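/- arXiv:2501.11095 — 3 statements merged into one kernel-verified Lean document; each statement's English description precedes it below -/
import Mathlib

section
/- Let V be a finite-dimensional real inner product space, let G be a finite group acting on V by orthogonal linear transformations such that the only vector fixed by all elements of G is 0. Fix p ∈ (0,1) and orthogonal transformations P_1, ..., P_k arising from group elements g_1, ..., g_k that generate G. Set R_i = (1-p)·I + p·P_i. Then the linear transformation I - R_1⋯R_k is invertible. -/
/-!
Each `R i` averages the identity with an isometry, so by strict convexity of the norm it either
fixes a vector or strictly shrinks it. A fixed vector of the product `R₁ ⋯ R_k` therefore has to be
fixed by every factor (otherwise its norm would drop somewhere along the way and never recover),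
hence by every generator `g i`, hence by all of `G`; so it is `0`.
-/

open RealInnerProductSpace

section Averaged

variable {E : Type*} [NormedAddCommGroup E] [NormedSpace ℝ E]

lemma Module.End.norm_list_prod_apply_le {l : List (Module.End ℝ E)}
    (hl : ∀ f ∈ l, ∀ x, ‖f x‖ ≤ ‖x‖) (x : E) : ‖l.prod x‖ ≤ ‖x‖ := by
  induction l with
  | nil => simp
  | cons f t ih =>
    simp only [List.forall_mem_cons] at hl
    exact (hl.1 _).trans (ih hl.2)

lemma Module.End.apply_eq_self_of_list_prod_apply_eq_self {l : List (Module.End ℝ E)}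
    (hl : ∀ f ∈ l, ∀ x, f x = x ∨ ‖f x‖ < ‖x‖) {v : E} (hv : l.prod v = v) :
    ∀ f ∈ l, f v = v := by
  induction l with
  | nil => simp
  | cons f t ih =>
    simp only [List.forall_mem_cons] at hl ⊢
    rw [List.prod_cons, Module.End.mul_apply] at hv
    have hu : ‖t.prod v‖ ≤ ‖v‖ :=
      norm_list_prod_apply_le (fun g hg x ↦ (hl.2 g hg x).elim (fun h ↦ (congrArg norm h).le)
        le_of_lt) v
    have hfu : f (t.prod v) = t.prod v :=
      (hl.1 _).resolve_right (by rw [hv]; exact not_lt.2 hu)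
    have htv : t.prod v = v := hfu.symm.trans hv
    exact ⟨htv ▸ hfu, ih hl.2 htv⟩

lemma Module.End.averaged_apply_eq_self_or_norm_lt [StrictConvexSpace ℝ E] {T : Module.End ℝ E}
    (hT : ∀ x, ‖T x‖ = ‖x‖) {p : ℝ} (hp : p ∈ Set.Ioo (0 : ℝ) 1) (x : E) :
    ((1 - p) • 1 + p • T) x = x ∨ ‖((1 - p) • 1 + p • T) x‖ < ‖x‖ := by
  by_cases h : T x = x
  · left
    simp only [LinearMap.add_apply, LinearMap.smul_apply, Module.End.one_apply, h]
    module
  · right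
    exact norm_combo_lt_of_ne le_rfl (hT x).le (Ne.symm h) (sub_pos.2 hp.2) hp.1 (by ring)

end Averaged

lemma Module.End.apply_eq_self_of_averaged_apply_eq_self {M : Type*} [AddCommGroup M]
    [Module ℝ M] {T : Module.End ℝ M} {p : ℝ} (hp : p ≠ 0) {x : M}
    (h : ((1 - p) • 1 + p • T) x = x) : T x = x := by
  simp only [LinearMap.add_apply, LinearMap.smul_apply, Module.End.one_apply] at h
  have : p • (T x - x) = 0 := by linear_combination (norm := module) h
  exact sub_eq_zero.1 ((smul_eq_zero.1 this).resolve_left hp)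

lemma Representation.apply_eq_self_of_closure_eq_top {k G V : Type*} [CommSemiring k] [Group G]
    [AddCommMonoid V] [Module k V] (ρ : Representation k G V) {S : Set G}
    (hS : Subgroup.closure S = ⊤) {v : V} (hv : ∀ s ∈ S, ρ s v = v) (h : G) : ρ h v = v := by
  induction (hS ▸ Subgroup.mem_top h : h ∈ Subgroup.closure S) using Subgroup.closure_induction with
  | mem s hs => exact hv s hs
  | one => simp
  | mul a b _ _ ha hb => rw [map_mul, Module.End.mul_apply, hb, ha]
  | inv a _ ha => exact ρ.inv_apply_eq_iff.2 ha.symm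

theorem stmt1_general {V : Type*} [NormedAddCommGroup V] [InnerProductSpace ℝ V]
    [FiniteDimensional ℝ V] {G : Type*} [Group G]
    (ρ : Representation ℝ G V)
    (horth : ∀ g : G, ∀ x y : V, ⟪ρ g x, ρ g y⟫ = ⟪x, y⟫)
    (hfix : ∀ v : V, (∀ g : G, ρ g v = v) → v = 0)
    {k : ℕ} (g : Fin k → G) (hgen : Subgroup.closure (Set.range g) = ⊤)
    {p : ℝ} (hp : p ∈ Set.Ioo (0:ℝ) 1)
    (R : Fin k → Module.End ℝ V)
    (hR : ∀ i, R i = (1 - p) • (1 : Module.End ℝ V) + p • ρ (g i)) :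
    IsUnit ((1 : Module.End ℝ V) - (List.ofFn R).prod) := by
  rw [LinearMap.isUnit_iff_ker_eq_bot, LinearMap.ker_eq_bot']
  intro v hv
  have hnorm (h : G) (x : V) : ‖ρ h x‖ = ‖x‖ := ((ρ h).isometryOfInner (horth h)).norm_map x
  have hR_fix : ∀ f ∈ List.ofFn R, f v = v := by
    refine Module.End.apply_eq_self_of_list_prod_apply_eq_self ?_ (sub_eq_zero.1 hv).symm
    simp only [List.forall_mem_ofFn_iff, hR]
    exact fun i ↦ Module.End.averaged_apply_eq_self_or_norm_lt (hnorm (g i)) hp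
  refine hfix v (ρ.apply_eq_self_of_closure_eq_top hgen ?_)
  rintro _ ⟨i, rfl⟩
  exact Module.End.apply_eq_self_of_averaged_apply_eq_self hp.1.ne'
    (hR i ▸ hR_fix (R i) ((List.mem_ofFn' R _).2 ⟨i, rfl⟩))

theorem stmt1 {V : Type*} [NormedAddCommGroup V] [InnerProductSpace ℝ V]
    [FiniteDimensional ℝ V] {G : Type*} [Group G] [Finite G]
    (ρ : Representation ℝ G V)
    (horth : ∀ g : G, ∀ x y : V, ⟪ρ g x, ρ g y⟫ = ⟪x, y⟫)
    (hfix : ∀ v : V, (∀ g : G, ρ g v = v) → v = 0)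
    {k : ℕ} (g : Fin k → G) (hgen : Subgroup.closure (Set.range g) = ⊤)
    {p : ℝ} (hp : p ∈ Set.Ioo (0:ℝ) 1)
    (R : Fin k → Module.End ℝ V)
    (hR : ∀ i, R i = (1 - p) • (1 : Module.End ℝ V) + p • ρ (g i)) :
    IsUnit ((1 : Module.End ℝ V) - (List.ofFn R).prod) :=
  stmt1_general ρ horth hfix g hgen hp R hR
end

section
/- Let n ≥ 2, fix p ∈ (0,1), and consider ℝⁿ with the type-A operators: for 0 ≤ i ≤ n−1, P̌_{s_i} is the permutation matrix swapping coordinates i and i+1 cyclically (indices mod n, so P̌_{s₀} swaps coordinates n and 1), and Ř_{s_i} = p·P̌_{s_i} + (1−p)·I_n. For 1 ≤ d ≤ n−1, let c^{(d)} = s_d s_{d+1} ⋯ s_{n−1} s_{d−1} ⋯ s₁ s₀ and Ř_{c^{(d)}} the corresponding product (rightmost letter applied first). Let ω_d = Σ_{i=1}^d e_i. Then (I_n − Ř_{c^{(d)}}) ω_d = −(1−p)(Σ_{i=1}^{n−d−1} pⁱ e_{d+i} − Σ_{j=1}^{d−1} pʲ e_{d+1−j}) − (p^{n−d+1} + p^{d+1}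 − p^d − p)·e₁ + (p^{n−d+1} − p^{n−d} + p^{d+1} − p)·e_n. -/
open Fin.NatCast

/-- `Ř_{s_i} = p·P̌_{s_i} + (1−p)·I` on `ℝⁿ` with `n = m + 2`, where `P̌_{s_i}`
swaps coordinates `i − 1` and `i` cyclically mod `n` (0-based coordinates). -/
noncomputable def RA (m : ℕ) (p : ℝ) (i : ℕ) (γ : Fin (m + 2) → ℝ) : Fin (m + 2) → ℝ :=
  (1 - p) • γ + p • (γ ∘ Equiv.swap ((i + (m + 1) : ℕ) : Fin (m + 2)) ((i : ℕ) : Fin (m + 2)))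

/-- `Ř_{c^{(d)}}` for the word `c^{(d)} = s_d s_{d+1} ⋯ s_{n−1} s_{d−1} ⋯ s₁ s₀`,
with the letters applied in the order `s_d, s_{d+1}, …, s_{n−1}, s_{d−1}, …, s₁, s₀`. -/
noncomputable def RcA (m : ℕ) (p : ℝ) (d : ℕ) (γ : Fin (m + 2) → ℝ) : Fin (m + 2) → ℝ :=
  ((List.range' d (m + 2 - d)) ++ (List.range d).reverse).foldl (fun v i => RA m p i v) γ

/-- `ω_d = Σ_{i=1}^d e_i`. -/
noncomputable def omegaA (m : ℕ) (d : ℕ) : Fin (m + 2) → ℝ := fun i =>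
  if (i : ℕ) < d then 1 else 0

lemma finCast_mk (m a : ℕ) (ha : a < m + 2) : ((a : ℕ) : Fin (m + 2)) = ⟨a, ha⟩ := by
  apply Fin.ext
  simp [Fin.val_natCast, Nat.mod_eq_of_lt ha]

lemma finCast_eq_iff (m a : ℕ) (ha : a < m + 2) (x : Fin (m + 2)) :
    (x = ((a : ℕ) : Fin (m + 2))) ↔ ((x : ℕ) = a) := by
  rw [finCast_mk m a ha, Fin.ext_iff]

lemma RA_eval (m : ℕ) (p : ℝ) (a : ℕ) (ha : a + 1 ≤ m + 1) (γ : Fin (m + 2) → ℝ) (x : Fin (m + 2)) :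
    RA m p (a + 1) γ x = (1 - p) * γ x +
      p * γ (if (x : ℕ) = a then (⟨a + 1, by omega⟩ : Fin (m + 2))
             else if (x : ℕ) = a + 1 then (⟨a, by omega⟩ : Fin (m + 2)) else x) := by
  have hc : (((a + 1) + (m + 1) : ℕ) : Fin (m + 2)) = (⟨a, by omega⟩ : Fin (m + 2)) := by
    apply Fin.ext
    rw [Fin.val_natCast, show a + 1 + (m + 1) = a + (m + 2) by omega, Nat.add_mod_right,
      Nat.mod_eq_of_lt (by omega)]
  simp only [RA, Pi.add_apply, Pi.smul_apply, smul_eq_mul, Function.comp_apply, hc,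
    finCast_mk m (a + 1) (by omega), Equiv.swap_apply_def, Fin.ext_iff]

lemma RA_eval_zero (m : ℕ) (p : ℝ) (γ : Fin (m + 2) → ℝ) (x : Fin (m + 2)) :
    RA m p 0 γ x = (1 - p) * γ x +
      p * γ (if (x : ℕ) = m + 1 then (⟨0, by omega⟩ : Fin (m + 2))
             else if (x : ℕ) = 0 then (⟨m + 1, by omega⟩ : Fin (m + 2)) else x) := by
  have hc : ((0 + (m + 1) : ℕ) : Fin (m + 2)) = (⟨m + 1, by omega⟩ : Fin (m + 2)) := by
    apply Fin.ext
    rw [Fin.val_natCast, Nat.mod_eq_of_lt (by omega)]; simp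
  have hc0 : ((0 : ℕ) : Fin (m + 2)) = (⟨0, by omega⟩ : Fin (m + 2)) := by
    apply Fin.ext; simp
  simp only [RA, Pi.add_apply, Pi.smul_apply, smul_eq_mul, Function.comp_apply, hc, hc0,
    Equiv.swap_apply_def, Fin.ext_iff]

noncomputable def Hvec (m d : ℕ) (p : ℝ) (k : ℕ) : Fin (m + 2) → ℝ := fun i =>
  if (i : ℕ) + 1 < d then 1
  else if (i : ℕ) + 1 = d then 1 - p
  else if (i : ℕ) + 1 < d + k then (1 - p) * p ^ ((i : ℕ) - d + 1)
  else if (i : ℕ) + 1 = d + k then p ^ k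
  else 0

lemma stepA (m d : ℕ) (p : ℝ) (hd1 : 1 ≤ d) (hd2 : d ≤ m + 1) :
    RA m p d (omegaA m d) = Hvec m d p 1 := by
  funext x
  obtain ⟨a, rfl⟩ : ∃ a, d = a + 1 := ⟨d - 1, by omega⟩
  rw [RA_eval m p a (by omega)]
  have hx := x.isLt
  simp only [omegaA, Hvec]
  by_cases h1 : (x : ℕ) = a
  · rw [if_pos h1]
    simp only [Fin.val_mk, h1]
    split_ifs <;> first | omega | ring1
  · rw [if_neg h1]
    by_cases h2 : (x : ℕ) = a + 1
    · rw [if_pos h2]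
      simp only [Fin.val_mk, h2]
      split_ifs <;> first | omega | ring1
    · rw [if_neg h2]
      split_ifs <;> first | omega | ring1

lemma stepB (m d : ℕ) (p : ℝ) (k : ℕ) (hk : 1 ≤ k) (hdk : d + k ≤ m + 1) (hd1 : 1 ≤ d) :
    RA m p (d + k) (Hvec m d p k) = Hvec m d p (k + 1) := by
  funext x
  obtain ⟨a, ha⟩ : ∃ a, d + k = a + 1 := ⟨d + k - 1, by omega⟩
  rw [ha, RA_eval m p a (by omega)]
  have hx := x.isLt
  simp only [Hvec]
  by_cases h1 : (x : ℕ) = a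
  · rw [if_pos h1]
    simp only [Fin.val_mk, h1]
    split_ifs <;>
      first | omega | ring1 |
        (simp only [show a - d + 1 = k from by omega,
          show a + 1 - d + 1 = k + 1 from by omega, pow_succ]; ring1)
  · rw [if_neg h1]
    by_cases h2 : (x : ℕ) = a + 1
    · rw [if_pos h2]
      simp only [Fin.val_mk, h2]
      split_ifs <;>
        first | omega | ring1 | (rw [pow_succ]; ring1) |
          (simp only [show a - d + 1 = k from by omega, pow_succ]; ring1)
    · rw [if_neg h2]
      split_ifs <;> first | omega | ring1

lemma first_block (m d : ℕ) (p : ℝ) (hd1 : 1 ≤ d) (k : ℕ) (hk1 : 1 ≤ k) (hk2 : d + k ≤ m + 2) :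
    (List.range' d k).foldl (fun v i => RA m p i v) (omegaA m d) = Hvec m d p k := by
  induction k with
  | zero => omega
  | succ k ih =>
    rcases Nat.lt_or_ge k 1 with h | h
    · obtain rfl : k = 0 := by omega
      simp only [Nat.zero_add, List.range'_one, List.foldl_cons, List.foldl_nil]
      exact stepA m d p hd1 (by omega)
    · rw [List.range'_concat, List.foldl_append, ih h (by omega)]
      simp only [List.foldl_cons, List.foldl_nil, Nat.one_mul]
      exact stepB m d p k h (by omega) hd1

/-- vector after further applying `s_{d-1}, …, s_{t+1}` (i.e. down to `t+1`). -/
noncomputable def Gvec (m d : ℕ) (p : ℝ) (t : ℕ) : Fin (m + 2) → ℝ := fun i =>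
  if (i : ℕ) < t then 1
  else if (i : ℕ) = t then 1 - p ^ (d - t)
  else if (i : ℕ) < d then 1 - p ^ (d - (i : ℕ)) + p ^ (d - (i : ℕ) + 1)
  else if (i : ℕ) + 1 < m + 2 then (1 - p) * p ^ ((i : ℕ) - d + 1)
  else p ^ (m + 2 - d)

lemma GH (m d : ℕ) (p : ℝ) (hd1 : 1 ≤ d) (hd2 : d ≤ m + 1) :
    Gvec m d p (d - 1) = Hvec m d p (m + 2 - d) := by
  funext x
  have hx := x.isLt
  simp only [Gvec, Hvec, show d - (d - 1) = 1 from by omega, pow_one,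
    show d + (m + 2 - d) = m + 2 from by omega]
  split_ifs <;> first | omega | ring1

lemma stepE (m d : ℕ) (p : ℝ) (t : ℕ) (ht1 : 1 ≤ t) (ht2 : t ≤ d - 1) (hd2 : d ≤ m + 1) :
    RA m p t (Gvec m d p t) = Gvec m d p (t - 1) := by
  funext x
  obtain ⟨a, rfl⟩ : ∃ a, t = a + 1 := ⟨t - 1, by omega⟩
  rw [RA_eval m p a (by omega)]
  have hx := x.isLt
  simp only [Gvec]
  by_cases h1 : (x : ℕ) = a
  · rw [if_pos h1]
    simp only [Fin.val_mk, h1]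
    split_ifs <;> first | omega | ring1 |
      (simp only [Nat.add_sub_cancel, show d - a = d - (a + 1) + 1 from by omega, pow_succ]; ring1)
  · rw [if_neg h1]
    by_cases h2 : (x : ℕ) = a + 1
    · simp only [h2, Nat.succ_ne_self, eq_self_iff_true, if_true, if_false, Fin.val_mk]
      split_ifs <;> first | omega | ring1 |
        (simp only [Nat.add_sub_cancel, show d - a = d - (a + 1) + 1 from by omega, pow_succ];
          ring1)
    · simp only [h1, h2, if_false]
      split_ifs <;> first | omega | ring1

lemma second_block (m d : ℕ) (p : ℝ) (hd2 : d ≤ m + 1) (t : ℕ) (ht : t ≤ d - 1) :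
    (List.range' (d - t) t).reverse.foldl (fun v i => RA m p i v) (Gvec m d p (d - 1)) =
      Gvec m d p (d - 1 - t) := by
  induction t with
  | zero => simp
  | succ t ih =>
    have hlist : List.range' (d - (t + 1)) (t + 1) = (d - t - 1) :: List.range' (d - t) t := by
      rw [List.range'_succ, show d - (t + 1) = d - t - 1 from by omega,
        show d - t - 1 + 1 = d - t from by omega]
    rw [hlist, List.reverse_cons, List.foldl_append]
    rw [ih (by omega)]
    simp only [List.foldl_cons, List.foldl_nil]
    have := stepE m d p (d - 1 - t) (by omega) (by omega) hd2
    rw [show d - t - 1 = d - 1 - t from by omega, this, show d - 1 - t - 1 = d - 1 - (t + 1) from by omega]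

lemma RcA_eq (m d : ℕ) (p : ℝ) (hd1 : 1 ≤ d) (hd2 : d ≤ m + 1) :
    RcA m p d (omegaA m d) = RA m p 0 (Gvec m d p 0) := by
  unfold RcA
  rw [List.foldl_append, first_block m d p hd1 (m + 2 - d) (by omega) (by omega),
    ← GH m d p hd1 hd2]
  have hr : (List.range d).reverse = (List.range' 1 (d - 1)).reverse ++ [0] := by
    conv_lhs => rw [List.range_eq_range', show d = (d - 1) + 1 from by omega, List.range'_succ]
    simp
  have hsb := second_block m d p hd2 (d - 1) (le_refl _)
  rw [show d - (d - 1) = 1 from by omega] at hsb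
  rw [hr, List.foldl_append, hsb, show d - 1 - (d - 1) = 0 from by omega]
  simp

theorem stmt16 (m : ℕ) (p : ℝ) (hp : p ∈ Set.Ioo (0:ℝ) 1)
    (d : ℕ) (hd1 : 1 ≤ d) (hd2 : d ≤ m + 1) :
    omegaA m d - RcA m p d (omegaA m d) =
      -((1 - p) •
          ((∑ i ∈ Finset.Icc 1 (m + 1 - d),
              p ^ i • (Pi.single ((d + i - 1 : ℕ) : Fin (m + 2)) (1 : ℝ) : Fin (m + 2) → ℝ)) -
            ∑ j ∈ Finset.Icc 1 (d - 1),
              p ^ j • (Pi.single ((d - j : ℕ) : Fin (m + 2)) (1 : ℝ) : Fin (m + 2) → ℝ)))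
        - (p ^ (m + 3 - d) + p ^ (d + 1) - p ^ d - p) •
            (Pi.single (0 : Fin (m + 2)) (1 : ℝ) : Fin (m + 2) → ℝ)
        + (p ^ (m + 3 - d) - p ^ (m + 2 - d) + p ^ (d + 1) - p) •
            (Pi.single ((m + 1 : ℕ) : Fin (m + 2)) (1 : ℝ) : Fin (m + 2) → ℝ) := by
  rw [RcA_eq m d p hd1 hd2]
  funext x
  have hx := x.isLt
  simp only [Pi.sub_apply, Pi.add_apply, Pi.neg_apply, Pi.smul_apply, smul_eq_mul,
    Finset.sum_apply, Pi.single_apply, omegaA]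
  rw [RA_eval_zero]
  rcases Nat.lt_or_ge (x : ℕ) 1 with h0 | h1
  · -- x = 0
    have h0 : (x : ℕ) = 0 := by omega
    have hs1 : (∑ i ∈ Finset.Icc 1 (m + 1 - d),
        p ^ i * if x = ((d + i - 1 : ℕ) : Fin (m + 2)) then (1:ℝ) else 0) = 0 := by
      refine Finset.sum_eq_zero fun i hi => ?_
      rw [Finset.mem_Icc] at hi
      rw [if_neg (by rw [finCast_eq_iff m _ (by omega)]; omega), mul_zero]
    have hs2 : (∑ j ∈ Finset.Icc 1 (d - 1),
        p ^ j * if x = ((d - j : ℕ) : Fin (m + 2)) then (1:ℝ) else 0) = 0 := by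
      refine Finset.sum_eq_zero fun j hj => ?_
      rw [Finset.mem_Icc] at hj
      rw [if_neg (by rw [finCast_eq_iff m _ (by omega)]; omega), mul_zero]
    rw [hs1, hs2, if_pos (show x = 0 from by apply Fin.ext; simpa using h0),
      if_neg (show ¬ x = ((m + 1 : ℕ) : Fin (m + 2)) from by
        rw [finCast_eq_iff m _ (by omega)]; omega),
      if_neg (show ¬ (x : ℕ) = m + 1 from by omega), if_pos h0, if_pos (show (x : ℕ) < d from by omega)]
    have hg1 : Gvec m d p 0 x = 1 - p ^ d := by
      simp only [Gvec, h0]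
      norm_num
    have hg2 : Gvec m d p 0 (⟨m + 1, by omega⟩ : Fin (m + 2)) = p ^ (m + 2 - d) := by
      simp only [Gvec, Fin.val_mk]
      split_ifs <;> first | rfl | omega | (exfalso; assumption)
    rw [hg1, hg2, show m + 3 - d = (m + 2 - d) + 1 from by omega, pow_succ]
    ring
  · rcases Nat.lt_or_ge (x : ℕ) d with h2 | h3
    · -- 1 ≤ x ≤ d - 1
      have hs1 : (∑ i ∈ Finset.Icc 1 (m + 1 - d),
          p ^ i * if x = ((d + i - 1 : ℕ) : Fin (m + 2)) then (1:ℝ) else 0) = 0 := by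
        refine Finset.sum_eq_zero fun i hi => ?_
        rw [Finset.mem_Icc] at hi
        rw [if_neg (by rw [finCast_eq_iff m _ (by omega)]; omega), mul_zero]
      have hs2 : (∑ j ∈ Finset.Icc 1 (d - 1),
          p ^ j * if x = ((d - j : ℕ) : Fin (m + 2)) then (1:ℝ) else 0) = p ^ (d - (x : ℕ)) := by
        rw [Finset.sum_eq_single (d - (x : ℕ))]
        · rw [if_pos (by rw [finCast_eq_iff m _ (by omega)]; omega), mul_one]
        · intro b hb hbne
          rw [Finset.mem_Icc] at hb
          rw [if_neg (by rw [finCast_eq_iff m _ (by omega)]; omega), mul_zero]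
        · intro hnot
          exact absurd (Finset.mem_Icc.mpr (by omega)) hnot
      rw [hs1, hs2, if_neg (show ¬ x = 0 from by
          intro h; rw [h] at h1; simp at h1),
        if_neg (show ¬ x = ((m + 1 : ℕ) : Fin (m + 2)) from by
          rw [finCast_eq_iff m _ (by omega)]; omega),
        if_neg (show ¬ (x : ℕ) = m + 1 from by omega),
        if_neg (show ¬ (x : ℕ) = 0 from by omega), if_pos h2]
      have hg1 : Gvec m d p 0 x = 1 - p ^ (d - (x : ℕ)) + p ^ (d - (x : ℕ) + 1) := by
        simp only [Gvec]
        rw [if_neg (by omega), if_neg (by omega), if_pos h2]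
      rw [hg1, pow_succ]
      ring
    · rcases Nat.lt_or_ge (x : ℕ) (m + 1) with h4 | h5
      · -- d ≤ x ≤ m
        have hs1 : (∑ i ∈ Finset.Icc 1 (m + 1 - d),
            p ^ i * if x = ((d + i - 1 : ℕ) : Fin (m + 2)) then (1:ℝ) else 0) =
              p ^ ((x : ℕ) - d + 1) := by
          rw [Finset.sum_eq_single ((x : ℕ) - d + 1)]
          · rw [if_pos (by rw [finCast_eq_iff m _ (by omega)]; omega), mul_one]
          · intro b hb hbne
            rw [Finset.mem_Icc] at hb
            rw [if_neg (by rw [finCast_eq_iff m _ (by omega)]; omega), mul_zero]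
          · intro hnot
            exact absurd (Finset.mem_Icc.mpr (by omega)) hnot
        have hs2 : (∑ j ∈ Finset.Icc 1 (d - 1),
            p ^ j * if x = ((d - j : ℕ) : Fin (m + 2)) then (1:ℝ) else 0) = 0 := by
          refine Finset.sum_eq_zero fun j hj => ?_
          rw [Finset.mem_Icc] at hj
          rw [if_neg (by rw [finCast_eq_iff m _ (by omega)]; omega), mul_zero]
        rw [hs1, hs2, if_neg (show ¬ x = 0 from by
            intro h; rw [h] at h3; simp at h3; omega),
          if_neg (show ¬ x = ((m + 1 : ℕ) : Fin (m + 2)) from by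
            rw [finCast_eq_iff m _ (by omega)]; omega),
          if_neg (show ¬ (x : ℕ) = m + 1 from by omega),
          if_neg (show ¬ (x : ℕ) = 0 from by omega),
          if_neg (show ¬ (x : ℕ) < d from by omega)]
        have hg1 : Gvec m d p 0 x = (1 - p) * p ^ ((x : ℕ) - d + 1) := by
          simp only [Gvec]
          rw [if_neg (by omega), if_neg (by omega), if_neg (by omega), if_pos (by omega)]
        rw [hg1]
        ring
      · -- x = m + 1
        have h0 : (x : ℕ) = m + 1 := by omega
        have hs1 : (∑ i ∈ Finset.Icc 1 (m + 1 - d),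
            p ^ i * if x = ((d + i - 1 : ℕ) : Fin (m + 2)) then (1:ℝ) else 0) = 0 := by
          refine Finset.sum_eq_zero fun i hi => ?_
          rw [Finset.mem_Icc] at hi
          rw [if_neg (by rw [finCast_eq_iff m _ (by omega)]; omega), mul_zero]
        have hs2 : (∑ j ∈ Finset.Icc 1 (d - 1),
            p ^ j * if x = ((d - j : ℕ) : Fin (m + 2)) then (1:ℝ) else 0) = 0 := by
          refine Finset.sum_eq_zero fun j hj => ?_
          rw [Finset.mem_Icc] at hj
          rw [if_neg (by rw [finCast_eq_iff m _ (by omega)]; omega), mul_zero]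
        rw [hs1, hs2, if_neg (show ¬ x = 0 from by
            intro h; rw [h] at h0; simp at h0),
          if_pos (show x = ((m + 1 : ℕ) : Fin (m + 2)) from by
            rw [finCast_eq_iff m _ (by omega)]; omega),
          if_pos h0, if_neg (show ¬ (x : ℕ) < d from by omega)]
        have hg1 : Gvec m d p 0 x = p ^ (m + 2 - d) := by
          simp only [Gvec]
          rw [if_neg (by omega), if_neg (by omega), if_neg (by omega), if_neg (by omega)]
        have hg2 : Gvec m d p 0 (⟨0, by omega⟩ : Fin (m + 2)) = 1 - p ^ d := by
          simp only [Gvec, Fin.val_mk]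
          norm_num
        rw [hg1, hg2, show m + 3 - d = (m + 2 - d) + 1 from by omega, pow_succ]
        ring
end

section
/- With the type-A_{n−1} setup and p ∈ (0,1), p ≠ 1/2: for every 1 ≤ d ≤ n−1, the quantity σ² := (1/(n−1))·(p/(2p−1))·⟨θ∨, (2p·(I_V − R_{c^{(d)}})⁻¹ − I_V) θ∨⟩ equals (2/(n(n−1)))·(p/(1−p)); in particular, it is independent of d. -/
open Fin.NatCast

/-- The claimed preimage `(1/(np))·(((n+1)/2 − dp/(n(1−p)))·ω_n + (p/(1−p))·ω_d − ζ)`,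
where `ζ = Σ i·e_i` and `ω_k = Σ_{i=1}^k e_i`, with `n = m + 2`. -/
noncomputable def upsA (m : ℕ) (p : ℝ) (d : ℕ) : Fin (m + 2) → ℝ := fun i =>
  (1 / ((m + 2 : ℝ) * p)) *
    ((((m : ℝ) + 3) / 2 - d * p / ((m + 2 : ℝ) * (1 - p))) +
      (if (i : ℕ) < d then p / (1 - p) else 0) - ((i : ℕ) + 1))

/-- `θ∨ = e₁ − e_n`. -/
noncomputable def thetaA (m : ℕ) : Fin (m + 2) → ℝ :=
  (Pi.single (0 : Fin (m + 2)) (1 : ℝ)) - Pi.single ((m + 1 : ℕ) : Fin (m + 2)) (1 : ℝ)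

namespace Aux
variable {m : ℕ} {p : ℝ}
def AIdx (m i : ℕ) : Fin (m + 2) := ((i + (m + 1) : ℕ) : Fin (m + 2))
def BIdx (m i : ℕ) : Fin (m + 2) := ((i : ℕ) : Fin (m + 2))
lemma RA_apply (i : ℕ) (γ : Fin (m+2) → ℝ) (j : Fin (m+2)) :
    RA m p i γ j = (1-p) * γ j + p * γ (Equiv.swap (AIdx m i) (BIdx m i) j) := rfl
lemma castA (k : ℕ) (h1 : 1 ≤ k) (h2 : k ≤ m+1) :
    AIdx m k = ⟨k-1, by omega⟩ := by
  apply Fin.ext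
  simp only [AIdx, Fin.val_natCast]
  have h : k + (m+1) = (k-1) + (m+2) := by omega
  rw [h, Nat.add_mod_right, Nat.mod_eq_of_lt (by omega)]
lemma castA0 : AIdx m 0 = ⟨m+1, by omega⟩ := by
  apply Fin.ext
  simp only [AIdx, Fin.val_natCast, Nat.zero_add]
  exact Nat.mod_eq_of_lt (by omega)
lemma castB (k : ℕ) (h2 : k ≤ m+1) : BIdx m k = ⟨k, by omega⟩ := by
  apply Fin.ext
  simp only [BIdx, Fin.val_natCast]
  exact Nat.mod_eq_of_lt (by omega)
lemma RA_apply' (i : ℕ) (A B : Fin (m+2)) (hA : AIdx m i = A) (hB : BIdx m i = B)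
    (γ : Fin (m+2) → ℝ) :
    RA m p i γ = fun j => if j = A then (1-p) * γ A + p * γ B
      else if j = B then (1-p) * γ B + p * γ A else γ j := by
  funext j
  rw [RA_apply, hA, hB]
  by_cases h1 : j = A
  · subst h1; simp [Equiv.swap_apply_left]
  · by_cases h2 : j = B
    · subst h2; simp [Equiv.swap_apply_right, h1]
    · rw [Equiv.swap_apply_of_ne_of_ne h1 h2]
      simp only [h1, h2, if_false]
      ring

/-- state during first loop: before applying `s_k` -/
noncomputable def G1 (m : ℕ) (p : ℝ) (d k : ℕ) : Fin (m+2) → ℝ := fun i =>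
  (if (i:ℕ) < d - 1 then p/(1-p) else 0) + (if (i:ℕ) + 1 = k then p/(1-p) else 0)
    - ((i:ℕ) + 1)

/-- state during second loop: after having applied down to `s_(j+1)` -/
noncomputable def H2 (m : ℕ) (p : ℝ) (d j : ℕ) : Fin (m+2) → ℝ := fun i =>
  (if (i:ℕ) < j then p/(1-p) else 0)
    + (if j + 1 ≤ (i:ℕ) ∧ (i:ℕ) ≤ d - 1 then p/(1-p) else 0)
    + (if (i:ℕ) = m+1 then p/(1-p) else 0) - ((i:ℕ) + 1)

noncomputable def FA (m : ℕ) (p : ℝ) (d : ℕ) : Fin (m+2) → ℝ := fun i =>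
  (if (i:ℕ) < d then p/(1-p) else 0) - ((i:ℕ) + 1)

noncomputable def FinalA (m : ℕ) (p : ℝ) (d : ℕ) : Fin (m+2) → ℝ := fun i =>
  if (i:ℕ) = 0 then p/(1-p) - 1 - p*((m:ℝ)+2)
  else if (i:ℕ) = m+1 then -((m:ℝ)+2) + p*((m:ℝ)+2)
  else (if (i:ℕ) ≤ d - 1 then p/(1-p) else 0) - ((i:ℕ) + 1)

lemma FA_eq_G1 (hd : 1 ≤ d) : FA m p d = G1 m p d d := by
  funext i
  simp only [FA, G1]
  by_cases h1 : (i:ℕ) < d - 1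
  · have h2 : (i:ℕ) < d := by omega
    have h3 : ¬ ((i:ℕ) + 1 = d) := by omega
    simp [h2, h1, h3]
  · by_cases h2 : (i:ℕ) + 1 = d
    · have h3 : (i:ℕ) < d := by omega
      simp [h1, h2, h3]
    · have h3 : ¬ ((i:ℕ) < d) := by omega
      simp [h1, h2, h3]

lemma G1_eq_H2 (hd1 : 1 ≤ d) (hd2 : d ≤ m+1) : G1 m p d (m+2) = H2 m p d (d-1) := by
  funext i
  simp only [G1, H2]
  have hiv : (i:ℕ) < m+2 := i.isLt
  have h2 : ((i:ℕ) + 1 = m + 2) ↔ ((i:ℕ) = m+1) := by omega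
  have h3 : ¬ (d - 1 + 1 ≤ (i:ℕ) ∧ (i:ℕ) ≤ d - 1) := by omega
  simp only [h3, if_false, h2]
  ring

variable (hp : p ∈ Set.Ioo (0:ℝ) 1)
include hp

lemma h1p : (1:ℝ) - p ≠ 0 := by
  have := hp.2; intro h; rw [sub_eq_zero] at h; rw [← h] at this; exact lt_irrefl _ this

lemma step1 {d : ℕ} (hd : 1 ≤ d) (k : ℕ) (h1 : d ≤ k) (h2 : k ≤ m+1) :
    RA m p k (G1 m p d k) = G1 m p d (k+1) := by
  have hne := h1p hp
  have hk1 : 1 ≤ k := le_trans hd h1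
  rw [RA_apply' k ⟨k-1, by omega⟩ ⟨k, by omega⟩ (castA k hk1 h2) (castB k h2)]
  funext i
  have hc : ((k - 1 : ℕ) : ℝ) = (k : ℝ) - 1 := by
    push_cast [Nat.cast_sub hk1]; ring
  by_cases hA : i = (⟨k-1, by omega⟩ : Fin (m+2))
  · rw [if_pos hA, hA]
    simp only [G1, Fin.val_mk]
    have e1 : ¬ (k - 1 < d - 1) := by omega
    have e2 : (k-1) + 1 = k := by omega
    have e3 : ¬ (k < d - 1) := by omega
    have e4 : ¬ (k + 1 = k) := by omega
    have e5 : ¬ (k - 1 + 1 = k + 1) := by omega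
    have e6 : ¬ (k = k + 1) := by omega
    simp only [e1, e2, e3, e4, e5, e6, if_true, if_false, if_neg, if_pos]
    rw [hc]; field_simp; ring
  · by_cases hB : i = (⟨k, by omega⟩ : Fin (m+2))
    · rw [if_neg hA, if_pos hB, hB]
      simp only [G1, Fin.val_mk]
      have e1 : ¬ (k - 1 < d - 1) := by omega
      have e2 : (k-1) + 1 = k := by omega
      have e3 : ¬ (k < d - 1) := by omega
      have e4 : ¬ (k + 1 = k) := by omega
      simp only [e1, e2, e3, e4, if_true, if_false, if_neg, if_pos]
      rw [hc]; field_simp; ring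
    · rw [if_neg hA, if_neg hB]
      simp only [G1]
      have hv1 : (i:ℕ) ≠ k - 1 := fun h => hA (Fin.ext h)
      have hv2 : (i:ℕ) ≠ k := fun h => hB (Fin.ext h)
      have e1 : ¬ ((i:ℕ) + 1 = k) := by omega
      have e2 : ¬ ((i:ℕ) + 1 = k + 1) := by omega
      simp only [e1, e2, if_false]

lemma step2 {d : ℕ} (hd2 : d ≤ m+1) (j : ℕ) (h1 : j + 1 ≤ d - 1) :
    RA m p (j+1) (H2 m p d (j+1)) = H2 m p d j := by
  have hne := h1p hp
  have hAc : AIdx m (j+1) = (⟨j, by omega⟩ : Fin (m+2)) := by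
    rw [castA (j+1) (by omega) (by omega)]
    apply Fin.ext; simp
  rw [RA_apply' (j+1) ⟨j, by omega⟩ ⟨j+1, by omega⟩ hAc (castB (j+1) (by omega))]
  funext i
  have e1 : j < j + 1 := by omega
  have e2 : ¬ (j + 1 + 1 ≤ j ∧ j ≤ d - 1) := by omega
  have e3 : ¬ (j = m+1) := by omega
  have e4 : ¬ (j + 1 < j + 1) := by omega
  have e5 : ¬ (j + 1 + 1 ≤ j + 1 ∧ j + 1 ≤ d - 1) := by omega
  have e6 : ¬ (j + 1 = m + 1) := by omega
  have e7 : ¬ (j < j) := by omega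
  have e8 : ¬ (j + 1 ≤ j ∧ j ≤ d - 1) := by omega
  have e9 : (j + 1 ≤ j + 1 ∧ j + 1 ≤ d - 1) := by omega
  have e10 : ¬ (j + 1 < j) := by omega
  by_cases hA : i = (⟨j, by omega⟩ : Fin (m+2))
  · rw [if_pos hA, hA]
    simp only [H2, Fin.val_mk]
    simp only [e1, e2, e3, e4, e5, e6, e7, e8, if_true, if_false]
    push_cast; field_simp; ring
  · by_cases hB : i = (⟨j+1, by omega⟩ : Fin (m+2))
    · rw [if_neg hA, if_pos hB, hB]
      simp only [H2, Fin.val_mk]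
      have e11 : ¬ (j + 1 + 1 ≤ j + 1) := by omega
      simp only [e1, e2, e3, e4, e5, e6, e9, e10, e11, and_true, if_true, if_false]
      push_cast; field_simp; ring
    · rw [if_neg hA, if_neg hB]
      simp only [H2]
      have hv1 : (i:ℕ) ≠ j := fun h => hA (Fin.ext h)
      have hv2 : (i:ℕ) ≠ j + 1 := fun h => hB (Fin.ext h)
      have f1 : ((i:ℕ) < j + 1) ↔ ((i:ℕ) < j) := by omega
      have f2 : (j + 1 + 1 ≤ (i:ℕ) ∧ (i:ℕ) ≤ d - 1) ↔ (j + 1 ≤ (i:ℕ) ∧ (i:ℕ) ≤ d - 1) := by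
        omega
      simp only [f1, f2]

lemma step0 {d : ℕ} (hd1 : 1 ≤ d) (hd2 : d ≤ m+1) :
    RA m p 0 (H2 m p d 0) = FinalA m p d := by
  have hne := h1p hp
  rw [RA_apply' 0 ⟨m+1, by omega⟩ ⟨0, by omega⟩ castA0 (castB 0 (by omega))]
  funext i
  have e1 : ¬ ((m+1 : ℕ) < 0) := by omega
  have e2 : ¬ (0 + 1 ≤ (m+1:ℕ) ∧ (m+1:ℕ) ≤ d - 1) := by omega
  have e3 : ¬ ((0:ℕ) < 0) := by omega
  have e4 : ¬ (0 + 1 ≤ (0:ℕ) ∧ (0:ℕ) ≤ d - 1) := by omega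
  have e5 : ¬ ((0:ℕ) = m+1) := by omega
  have e6 : ¬ ((m+1:ℕ) = 0) := by omega
  have e7 : ((m+1:ℕ) = m+1) := rfl
  by_cases hA : i = (⟨m+1, by omega⟩ : Fin (m+2))
  · rw [if_pos hA, hA]
    simp only [H2, FinalA, Fin.val_mk]
    simp only [e1, e2, e3, e4, e5, e6, e7, if_true, if_false]
    push_cast; field_simp; ring
  · by_cases hB : i = (⟨0, by omega⟩ : Fin (m+2))
    · rw [if_neg hA, if_pos hB, hB]
      simp only [H2, FinalA, Fin.val_mk]
      simp only [e1, e2, e3, e4, e5, e6, e7, if_true, if_false]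
      push_cast; field_simp; ring
    · rw [if_neg hA, if_neg hB]
      simp only [H2, FinalA]
      have hv1 : (i:ℕ) ≠ m+1 := fun h => hA (Fin.ext h)
      have hv2 : (i:ℕ) ≠ 0 := fun h => hB (Fin.ext h)
      have f1 : ¬ ((i:ℕ) < 0) := by omega
      have f2 : (0 + 1 ≤ (i:ℕ) ∧ (i:ℕ) ≤ d - 1) ↔ ((i:ℕ) ≤ d - 1) := by omega
      simp only [f1, f2, if_false, if_neg hv1, if_neg hv2]
      ring

lemma fold1 (hd : 1 ≤ d) : ∀ t k, d ≤ k → k + t ≤ m + 2 →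
    (List.range' k t).foldl (fun v i => RA m p i v) (G1 m p d k) = G1 m p d (k + t) := by
  intro t
  induction t with
  | zero => intro k _ _; simp
  | succ t ih =>
    intro k hk hkt
    rw [List.range'_succ, List.foldl_cons, step1 hp hd k hk (by omega)]
    have := ih (k+1) (by omega) (by omega)
    rw [show k + (t+1) = (k+1) + t by omega]
    exact this

lemma fold2 (hd1 : 1 ≤ d) (hd2 : d ≤ m+1) : ∀ j, j ≤ d - 1 →
    ((List.range (j+1)).reverse).foldl (fun v i => RA m p i v) (H2 m p d j) = FinalA m p d := by
  intro j
  induction j with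
  | zero =>
    intro _
    simp only [List.range_succ, List.range_zero, List.nil_append, List.reverse_singleton,
      List.foldl_cons, List.foldl_nil]
    exact step0 hp hd1 hd2
  | succ j ih =>
    intro hj
    rw [List.range_succ, List.reverse_append, List.reverse_singleton, List.singleton_append,
      List.foldl_cons, step2 hp hd2 j hj]
    exact ih (by omega)

lemma RcA_FA (hd1 : 1 ≤ d) (hd2 : d ≤ m+1) : RcA m p d (FA m p d) = FinalA m p d := by
  unfold RcA
  rw [List.foldl_append, FA_eq_G1 hd1,
    fold1 hp hd1 (m + 2 - d) d le_rfl (by omega),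
    show d + (m + 2 - d) = m + 2 by omega, G1_eq_H2 hd1 hd2,
    show d = (d - 1) + 1 by omega]
  exact fold2 hp hd1 hd2 (d-1) le_rfl

omit hp

lemma RA_affine (i : ℕ) (c e : ℝ) (x : Fin (m+2) → ℝ) :
    RA m p i (fun t => c * x t + e) = fun t => c * RA m p i x t + e := by
  funext j
  simp only [RA_apply]
  ring

lemma fold_affine (l : List ℕ) (c e : ℝ) (x : Fin (m+2) → ℝ) :
    l.foldl (fun v i => RA m p i v) (fun t => c * x t + e)
      = fun t => c * (l.foldl (fun v i => RA m p i v) x t) + e := by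
  induction l generalizing x with
  | nil => rfl
  | cons i l ih =>
    simp only [List.foldl_cons, RA_affine]
    exact ih (RA m p i x)

lemma RA_sub (i : ℕ) (x y : Fin (m+2) → ℝ) :
    RA m p i (x - y) = RA m p i x - RA m p i y := by
  funext j
  simp only [Pi.sub_apply, RA_apply]
  ring

lemma fold_sub (l : List ℕ) (x y : Fin (m+2) → ℝ) :
    l.foldl (fun v i => RA m p i v) (x - y)
      = l.foldl (fun v i => RA m p i v) x - l.foldl (fun v i => RA m p i v) y := by
  induction l generalizing x y with
  | nil => rfl
  | cons i l ih =>
    simp only [List.foldl_cons, RA_sub]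
    exact ih _ _

/-- sum of squares -/
noncomputable def Q (m : ℕ) (v : Fin (m+2) → ℝ) : ℝ := ∑ j, (v j)^2

lemma AB_ne (i : ℕ) (h : i ≤ m+1) : AIdx m i ≠ BIdx m i := by
  rcases Nat.eq_zero_or_pos i with rfl | hi
  · rw [castA0, castB 0 (by omega)]
    intro hc
    have := congrArg Fin.val hc
    simp only [Fin.val_mk] at this
    omega
  · rw [castA i hi h, castB i h]
    intro hc
    have := congrArg Fin.val hc
    simp only [Fin.val_mk] at this
    omega

lemma RA_at_A (i : ℕ) (v : Fin (m+2) → ℝ) :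
    RA m p i v (AIdx m i) = (1-p) * v (AIdx m i) + p * v (BIdx m i) := by
  rw [RA_apply, Equiv.swap_apply_left]

lemma RA_at_B (i : ℕ) (v : Fin (m+2) → ℝ) :
    RA m p i v (BIdx m i) = (1-p) * v (BIdx m i) + p * v (AIdx m i) := by
  rw [RA_apply, Equiv.swap_apply_right]

lemma RA_outside (i : ℕ) (v : Fin (m+2) → ℝ) (j : Fin (m+2))
    (h1 : j ≠ AIdx m i) (h2 : j ≠ BIdx m i) : RA m p i v j = v j := by
  rw [RA_apply, Equiv.swap_apply_of_ne_of_ne h1 h2]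
  ring

lemma Q_step (i : ℕ) (h : i ≤ m+1) (v : Fin (m+2) → ℝ) :
    Q m (RA m p i v) = Q m v
      - 2*p*(1-p)*(v (AIdx m i) - v (BIdx m i))^2 := by
  have hAB := AB_ne (m := m) i h
  have hsum : Q m (RA m p i v) - Q m v = ∑ j, ((RA m p i v j)^2 - (v j)^2) := by
    rw [Finset.sum_sub_distrib]; rfl
  have hzero : ∀ x ∈ Finset.univ, x ∉ ({AIdx m i, BIdx m i} : Finset (Fin (m+2))) →
      (RA m p i v x)^2 - (v x)^2 = 0 := by
    intro x _ hx
    simp only [Finset.mem_insert, Finset.mem_singleton, not_or] at hx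
    rw [RA_outside i v x hx.1 hx.2, sub_self]
  have hsub : ∑ j, ((RA m p i v j)^2 - (v j)^2)
      = ∑ j ∈ ({AIdx m i, BIdx m i} : Finset (Fin (m+2))), ((RA m p i v j)^2 - (v j)^2) :=
    (Finset.sum_subset (Finset.subset_univ _) hzero).symm
  rw [hsub, Finset.sum_pair hAB, RA_at_A, RA_at_B] at hsum
  linear_combination hsum

lemma RA_fix (i : ℕ) (v : Fin (m+2) → ℝ) (h : v (AIdx m i) = v (BIdx m i)) :
    RA m p i v = v := by
  funext j
  by_cases h1 : j = AIdx m i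
  · rw [h1, RA_at_A, h]; ring
  · by_cases h2 : j = BIdx m i
    · rw [h2, RA_at_B, h]; ring
    · exact RA_outside i v j h1 h2

include hp

lemma Q_fold_le (l : List ℕ) (hl : ∀ i ∈ l, i ≤ m+1) (v : Fin (m+2) → ℝ) :
    Q m (l.foldl (fun v i => RA m p i v) v) ≤ Q m v := by
  induction l generalizing v with
  | nil => exact le_refl _
  | cons i l ih =>
    simp only [List.foldl_cons]
    have h1 : Q m (l.foldl (fun v i => RA m p i v) (RA m p i v)) ≤ Q m (RA m p i v) :=
      ih (fun x hx => hl x (List.mem_cons_of_mem _ hx)) _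
    have h2 := Q_step (m := m) (p := p) i (hl i List.mem_cons_self) v
    have h3 : 0 ≤ 2*p*(1-p)*(v (AIdx m i) - v (BIdx m i))^2 := by
      have := hp.1; have := hp.2
      have : (0:ℝ) ≤ 2*p*(1-p) := by nlinarith
      nlinarith [sq_nonneg (v (AIdx m i) - v (BIdx m i))]
    linarith

lemma fold_fix (l : List ℕ) (hl : ∀ i ∈ l, i ≤ m+1) (v : Fin (m+2) → ℝ)
    (h : l.foldl (fun v i => RA m p i v) v = v) :
    ∀ i ∈ l, v (AIdx m i) = v (BIdx m i) := by
  induction l generalizing v with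
  | nil => simp
  | cons i l ih =>
    rw [List.foldl_cons] at h
    have hi : i ≤ m+1 := hl i List.mem_cons_self
    have key0 : v (AIdx m i) = v (BIdx m i) := by
      by_contra hne
      have hQ1 : Q m (l.foldl (fun v i => RA m p i v) (RA m p i v)) ≤ Q m (RA m p i v) :=
        Q_fold_le hp l (fun x hx => hl x (List.mem_cons_of_mem _ hx)) _
      rw [h] at hQ1
      have hQ2 := Q_step (m := m) (p := p) i hi v
      have h3 : 0 < (v (AIdx m i) - v (BIdx m i))^2 := by
        have hne' : v (AIdx m i) - v (BIdx m i) ≠ 0 := sub_ne_zero_of_ne hne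
        exact lt_of_le_of_ne (sq_nonneg _) (Ne.symm (pow_ne_zero 2 hne'))
      have h4 : (0:ℝ) < 2*p*(1-p) := by have := hp.1; have := hp.2; nlinarith
      nlinarith
    have hfix : RA m p i v = v := RA_fix i v key0
    rw [hfix] at h
    intro i' hi'
    rcases List.mem_cons.mp hi' with rfl | hmem
    · exact key0
    · exact ih (fun x hx => hl x (List.mem_cons_of_mem _ hx)) v h i' hmem

end Aux

open Aux

lemma topcast {m : ℕ} : ((m + 1 : ℕ) : Fin (m + 2)) = ⟨m+1, by omega⟩ := by
  apply Fin.ext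
  rw [Fin.val_natCast]
  exact Nat.mod_eq_of_lt (by omega)

lemma theta_apply {m : ℕ} (t : Fin (m+2)) :
    thetaA m t = (if t = 0 then (1:ℝ) else 0) - (if t = ⟨m+1, by omega⟩ then 1 else 0) := by
  unfold thetaA
  rw [topcast]
  simp [Pi.single_apply]

lemma fin_top_ne_zero {m : ℕ} : (⟨m+1, by omega⟩ : Fin (m+2)) ≠ 0 := by
  intro hc
  have := congrArg Fin.val hc
  simp only [Fin.val_zero, Fin.val_mk] at this
  omega

lemma theta_sum {m : ℕ} (g : Fin (m+2) → ℝ) :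
    ∑ i, thetaA m i * g i = g 0 - g ⟨m+1, by omega⟩ := by
  have h : ∀ i : Fin (m+2), thetaA m i * g i
      = (if i = 0 then g i else 0) - (if i = (⟨m+1, by omega⟩ : Fin (m+2)) then g i else 0) := by
    intro i
    rw [theta_apply i]
    split_ifs <;> ring
  simp only [h, Finset.sum_sub_distrib]
  rw [Finset.sum_ite_eq' Finset.univ (0 : Fin (m+2)) g,
    Finset.sum_ite_eq' Finset.univ (⟨m+1, by omega⟩ : Fin (m+2)) g]
  simp

lemma theta_at_0 {m : ℕ} : thetaA m 0 = 1 := by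
  rw [theta_apply]
  simp [Ne.symm fin_top_ne_zero]

lemma theta_at_top {m : ℕ} : thetaA m (⟨m+1, by omega⟩ : Fin (m+2)) = -1 := by
  rw [theta_apply]
  simp [fin_top_ne_zero]

lemma FA_sub_Final {m d : ℕ} {p : ℝ} (hd1 : 1 ≤ d) (hd2 : d ≤ m+1) (t : Fin (m+2)) :
    FA m p d t - FinalA m p d t = ((m:ℝ)+2) * p * thetaA m t := by
  by_cases ht0 : t = 0
  · subst ht0
    have hd : (0:ℕ) < d := hd1
    rw [theta_at_0]
    have hF : FinalA m p d 0 = p/(1-p) - 1 - p*((m:ℝ)+2) := by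
      simp [FinalA]
    have hFA : FA m p d 0 = p/(1-p) - 1 := by
      simp [FA, hd]
    rw [hF, hFA]
    ring
  · by_cases ht1 : t = (⟨m+1, by omega⟩ : Fin (m+2))
    · subst ht1
      rw [theta_at_top]
      have h1 : ¬ ((m+1:ℕ) < d) := by omega
      have hF : FinalA m p d ⟨m+1, by omega⟩ = -((m:ℝ)+2) + p*((m:ℝ)+2) := by
        simp [FinalA]
      have hFA : FA m p d ⟨m+1, by omega⟩ = -((m:ℝ)+1+1) := by
        simp [FA, h1]
      rw [hF, hFA]
      ring
    · have hv0 : (t:ℕ) ≠ 0 := fun h => ht0 (Fin.ext h)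
      have hv1 : (t:ℕ) ≠ m+1 := fun h => ht1 (Fin.ext h)
      have hth : thetaA m t = 0 := by
        rw [theta_apply, if_neg ht0, if_neg ht1]
        ring
      rw [hth]
      have hiff : ((t:ℕ) < d) = ((t:ℕ) ≤ d - 1) := by
        apply propext; constructor <;> (intro; omega)
      simp only [FA, FinalA, if_neg hv0, if_neg hv1, hiff]
      ring

lemma mem_word {m d : ℕ} (hd2 : d ≤ m+1) (k : ℕ) (hk : k ≤ m+1) :
    k ∈ (List.range' d (m + 2 - d)) ++ (List.range d).reverse := by
  rcases le_or_gt d k with h | h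
  · exact List.mem_append_left _ (List.mem_range'_1.mpr ⟨h, by omega⟩)
  · exact List.mem_append_right _ (List.mem_reverse.mpr (List.mem_range.mpr h))

theorem stmt18 (m : ℕ) (p : ℝ) (hp : p ∈ Set.Ioo (0:ℝ) 1) (hp2 : p ≠ 1 / 2)
    (d : ℕ) (hd1 : 1 ≤ d) (hd2 : d ≤ m + 1) :
    ∀ υ : Fin (m + 2) → ℝ, (∑ i, υ i) = 0 → υ - RcA m p d υ = thetaA m →
      (1 / ((m : ℝ) + 1)) * (p / (2 * p - 1)) *
          (∑ i, thetaA m i * (2 * p * υ i - thetaA m i)) =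
        (2 / (((m : ℝ) + 2) * ((m : ℝ) + 1))) * (p / (1 - p)) := by
  intro υ _ hEq
  have hp0 : p ≠ 0 := ne_of_gt hp.1
  have hne : (1:ℝ) - p ≠ 0 := h1p hp
  have hm2 : ((m:ℝ) + 2) ≠ 0 := by positivity
  have hm1 : ((m:ℝ) + 1) ≠ 0 := by positivity
  have h2p : 2 * p - 1 ≠ 0 := by
    intro h; apply hp2; linarith
  set C : ℝ := 1 / ((m + 2 : ℝ) * p) with hCdef
  set K : ℝ := ((m : ℝ) + 3) / 2 - d * p / ((m + 2 : ℝ) * (1 - p)) with hKdef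
  -- upsA = C • FA + C*K
  have hdecomp : upsA m p d = fun t => C * FA m p d t + C * K := by
    funext t
    simp only [upsA, FA, hCdef, hKdef]
    ring
  -- RcA upsA
  have hRups : RcA m p d (upsA m p d) = fun t => C * FinalA m p d t + C * K := by
    rw [hdecomp]
    show (_ : List ℕ).foldl _ _ = _
    rw [fold_affine]
    have : ((List.range' d (m + 2 - d)) ++ (List.range d).reverse).foldl
        (fun v i => RA m p i v) (FA m p d) = FinalA m p d := RcA_FA hp hd1 hd2
    rw [this]
  -- upsA - RcA upsA = theta
  have hUps : ∀ t, upsA m p d t - RcA m p d (upsA m p d) t = thetaA m t := by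
    intro t
    have e0 : upsA m p d t = C * FA m p d t + C * K := by rw [hdecomp]
    have e1 : RcA m p d (upsA m p d) t = C * FinalA m p d t + C * K := by rw [hRups]
    rw [e0, e1]
    have h1 : C * FA m p d t + C * K - (C * FinalA m p d t + C * K)
        = C * (FA m p d t - FinalA m p d t) := by ring
    rw [h1, FA_sub_Final hd1 hd2 t, hCdef]
    field_simp
  -- w := υ - upsA is fixed by RcA
  set w : Fin (m+2) → ℝ := υ - upsA m p d with hwdef
  have hRw : RcA m p d w = w := by
    have hsub : RcA m p d w = RcA m p d υ - RcA m p d (upsA m p d) := by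
      rw [hwdef]
      exact fold_sub _ _ _
    funext t
    rw [hsub]
    have h1 : RcA m p d υ = υ - thetaA m := by
      rw [← hEq]; abel
    have h2 : RcA m p d (upsA m p d) t = upsA m p d t - thetaA m t :=
      by have := hUps t; linarith
    simp only [Pi.sub_apply, h1, hwdef]
    rw [h2]
    ring
  -- w is constant along the chain
  have hfix := fold_fix hp _ (fun i hi => by
    rcases List.mem_append.mp hi with h | h
    · have := List.mem_range'_1.mp h; omega
    · have := List.mem_range.mp (List.mem_reverse.mp h); omega) w hRw
  have hchain : ∀ k (hk : k ≤ m+1), w ⟨k, by omega⟩ = w 0 := by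
    intro k
    induction k with
    | zero => intro _; rfl
    | succ k ih =>
      intro hk
      have hmem := mem_word (m := m) hd2 (k+1) hk
      have h := hfix (k+1) hmem
      rw [castA (k+1) (by omega) hk, castB (k+1) hk] at h
      have hk' : k ≤ m + 1 := by omega
      have : (⟨k+1-1, by omega⟩ : Fin (m+2)) = ⟨k, by omega⟩ := Fin.ext (by simp)
      rw [this] at h
      rw [← h]
      exact ih hk'
  have hw01 : w ⟨m+1, by omega⟩ = w 0 := hchain (m+1) le_rfl
  -- evaluate the sum
  rw [theta_sum (fun i => 2 * p * υ i - thetaA m i)]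
  have hv0 : υ 0 = upsA m p d 0 + w 0 := by
    simp [hwdef]
  have hv1 : υ ⟨m+1, by omega⟩ = upsA m p d ⟨m+1, by omega⟩ + w ⟨m+1, by omega⟩ := by
    simp [hwdef]
  simp only [hv0, hv1, theta_at_0, theta_at_top, hw01]
  -- evaluate upsA at the two ends
  have hu0 : upsA m p d 0 = C * (K + p/(1-p) - 1) := by
    have h0 : ((0 : Fin (m+2)) : ℕ) = 0 := rfl
    have hd : (0:ℕ) < d := hd1
    simp only [upsA, h0, hCdef, hKdef]
    rw [if_pos hd]
    push_cast
    ring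
  have hu1 : upsA m p d ⟨m+1, by omega⟩ = C * (K - ((m:ℝ)+2)) := by
    have h1 : ¬ ((m+1:ℕ) < d) := by omega
    simp only [upsA, Fin.val_mk, hCdef, hKdef]
    rw [if_neg h1]
    push_cast
    ring
  rw [hu0, hu1, hCdef]
  field_simp
  ring_nf
  have h2p' : (-1 + p * 2) ≠ 0 := by intro h; apply h2p; linarith
  have key : p * (-1 + p * 2)⁻¹ * 4 - (-1 + p * 2)⁻¹ * 2 = 2 * ((-1 + p * 2) * (-1 + p * 2)⁻¹) := by ring
  rw [key, mul_inv_cancel₀ h2p', mul_one]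
end
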